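/- arXiv:2109.12620 — 2 statements merged into one kernel-verified Lean document; each statement's English description precedes it below -/
import Mathlib

section
/- Let X: X_0 →^{f_1} X_1 → ⋯ →^{f_n} X_n be a chain of finite G-sets of length n and K̄ an n-slice of the finite group G. For x ∈ X_0 let Ḡ^x denote the n-slice (G_x, G_{f_1(x)}, G_{f_2f_1(x)}, …, G_{f_n⋯f_1(x)}) of stabilizers (this is an n-slice since the maps are equivariant). Then φ_{K̄}(X) = Σ_{x ∈ [G\X_0]} m(K̄, Ḡ^x), where the sum is over a set of representatives of the G-orbits on X_0. -/
variable {G : Type*}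

/-- The mark `m(K̄,S̄) = |{gS₀ ∈ G/S₀ : g⁻¹Kᵢg ≤ Sᵢ for all i}|`. -/
noncomputable def mark [Group G] {n : ℕ} (K S : Fin (n + 1) → Subgroup G) : ℕ :=
  Nat.card {x : G ⧸ S 0 //
    ∃ g : G, QuotientGroup.mk g = x ∧ ∀ i, ∀ k ∈ K i, g⁻¹ * k * g ∈ S i}

/-- Composite map `X₀ → Xᵢ` of a chain of `G`-sets. -/
def chainComp (X : ℕ → Type) (f : ∀ i, X i → X (i + 1)) : ∀ i, X 0 → X i
  | 0 => id
  | i + 1 => f i ∘ chainComp X f i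

/-- The invariant set `Inv_{S̄}(X)`. -/
def sliceInv [Group G] {n : ℕ} (S : Fin (n + 1) → Subgroup G)
    (X : ℕ → Type) [∀ i, MulAction G (X i)] (f : ∀ i, X i → X (i + 1)) :
    Set (X 0) :=
  {x | ∀ i : Fin (n + 1), ∀ s ∈ S i, s • chainComp X f i x = chainComp X f i x}

/-- `φ_{S̄}(X) = |Inv_{S̄}(X)|`. -/
noncomputable def phiSlice [Group G] {n : ℕ} (S : Fin (n + 1) → Subgroup G)
    (X : ℕ → Type) [∀ i, MulAction G (X i)] (f : ∀ i, X i → X (i + 1)) : ℕ :=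
  Nat.card (sliceInv S X f)

/-!
Each `x ∈ Inv_{K̄}(X)` lies in the orbit of exactly one representative `r`, so `φ_{K̄}(X)` splits
as a sum over `r` of `|Inv_{K̄}(X) ∩ Gr|`. Identifying `Gr` with `G/G_r` through `gG_r ↦ gr`,
equivariance of the chain gives `G_{f_i⋯f_1(gr)} = g G_{f_i⋯f_1(r)} g⁻¹`, so `gr` is
`K̄`-invariant exactly when `g⁻¹K_ig ≤ G_{f_i⋯f_1(r)}` for all `i`: the cosets counted by
`m(K̄, Ḡ^r)`.
-/

open MulAction

section Orbits

variable [Group G] {α : Type*} [MulAction G α]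

lemma card_eq_sum_card_inter_orbit [Fintype α]
    (s : Set α) (R : Finset α) (hR : ∀ x : α, ∃! r : α, r ∈ R ∧ r ∈ orbit G x) :
    Nat.card s = ∑ r ∈ R, Nat.card ↥(s ∩ orbit G r) := by
  classical
  have hcover : s.toFinset = R.biUnion fun r => (s ∩ orbit G r).toFinset := by
    ext x
    obtain ⟨r, ⟨hrR, hrx⟩, -⟩ := hR x
    simp only [Set.mem_toFinset, Finset.mem_biUnion, Set.mem_inter_iff]
    exact ⟨fun hx => ⟨r, hrR, hx, mem_orbit_symm.mp hrx⟩, fun ⟨_, _, hx, _⟩ => hx⟩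
  have hdisj : (R : Set α).PairwiseDisjoint fun r => (s ∩ orbit G r).toFinset := by
    intro r hr r' hr' hne
    refine Finset.disjoint_left.mpr fun x hx hx' => hne ?_
    simp only [Set.mem_toFinset, Set.mem_inter_iff] at hx hx'
    exact (hR x).unique ⟨hr, mem_orbit_symm.mp hx.2⟩ ⟨hr', mem_orbit_symm.mp hx'.2⟩
  simp only [Nat.card_eq_card_toFinset, hcover, Finset.card_biUnion hdisj]

lemma card_inter_orbit_eq_card_quotient (s : Set α) (a : α) :
    Nat.card ↥(s ∩ orbit G a) =
      Nat.card {q : G ⧸ stabilizer G a // ∃ g : G, (g : G ⧸ stabilizer G a) = q ∧ g • a ∈ s} := by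
  symm
  refine Nat.card_congr (((orbitEquivQuotientStabilizer G a).symm.subtypeEquiv ?_).trans
    ((Equiv.subtypeSubtypeEquivSubtypeInter (· ∈ orbit G a) (· ∈ s)).trans
      (Equiv.setCongr (Set.inter_comm _ _))))
  intro q
  induction q using QuotientGroup.induction_on with
  | H g =>
    rw [orbitEquivQuotientStabilizer_symm_apply]
    refine ⟨fun ⟨g', hg', hg's⟩ => ?_, fun hgs => ⟨g, rfl, hgs⟩⟩
    rwa [← ofQuotientStabilizer_mk, hg', ofQuotientStabilizer_mk] at hg's

lemma mem_stabilizer_smul_iff (g k : G) (y : α) :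
    k ∈ stabilizer G (g • y) ↔ g⁻¹ * k * g ∈ stabilizer G y := by
  rw [mem_stabilizer_iff, mem_stabilizer_iff, mul_smul, mul_smul, inv_smul_eq_iff]

end Orbits

section Chains

variable [Group G] {X : ℕ → Type} [∀ i, MulAction G (X i)] {f : ∀ i, X i → X (i + 1)}

lemma chainComp_smul (hf : ∀ (i : ℕ) (g : G) (x : X i), f i (g • x) = g • f i x)
    (i : ℕ) (g : G) (x : X 0) :
    chainComp X f i (g • x) = g • chainComp X f i x := by
  induction i with
  | zero => rfl
  | succ i ih => simp only [chainComp, Function.comp_apply, ih, hf]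

lemma smul_mem_sliceInv_iff {n : ℕ} (K : Fin (n + 1) → Subgroup G)
    (hf : ∀ (i : ℕ) (g : G) (x : X i), f i (g • x) = g • f i x) (g : G) (x : X 0) :
    g • x ∈ sliceInv K X f ↔
      ∀ i, ∀ k ∈ K i, g⁻¹ * k * g ∈ stabilizer G (chainComp X f i x) := by
  simp only [sliceInv, Set.mem_ofPred_eq, chainComp_smul hf, ← mem_stabilizer_iff,
    mem_stabilizer_smul_iff]

end Chains

theorem phi_eq_sum_marks_general {n : ℕ} [Group G]
    (K : Fin (n + 1) → Subgroup G)
    (X : ℕ → Type) [∀ i, Fintype (X i)] [∀ i, MulAction G (X i)]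
    (f : ∀ i, X i → X (i + 1))
    (hf : ∀ (i : ℕ) (g : G) (x : X i), f i (g • x) = g • f i x)
    (R : Finset (X 0))
    (hR : ∀ x : X 0, ∃! r : X 0, r ∈ R ∧ r ∈ MulAction.orbit G x) :
    phiSlice K X f =
      ∑ r ∈ R, mark K (fun i : Fin (n + 1) =>
        MulAction.stabilizer G (chainComp X f i r)) := by
  rw [phiSlice, card_eq_sum_card_inter_orbit _ R hR]
  refine Finset.sum_congr rfl fun r _ => ?_
  simp only [card_inter_orbit_eq_card_quotient, smul_mem_sliceInv_iff K hf]
  -- `chainComp X f 0 = id`, so `mark` already counts cosets of `stabilizer G r`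
  rfl

/-- `φ_{K̄}(X) = Σ_{x ∈ [G\X₀]} m(K̄, Ḡˣ)`, where `Ḡˣ` is the slice
of stabilizers of the images of an orbit representative `x` along the chain. -/
theorem phi_eq_sum_marks {n : ℕ} [Group G] [Finite G]
    (K : Fin (n + 1) → Subgroup G) (hK : Monotone K)
    (X : ℕ → Type) [∀ i, Fintype (X i)] [∀ i, MulAction G (X i)]
    (f : ∀ i, X i → X (i + 1))
    (hf : ∀ (i : ℕ) (g : G) (x : X i), f i (g • x) = g • f i x)
    (R : Finset (X 0))
    (hR : ∀ x : X 0, ∃! r : X 0, r ∈ R ∧ r ∈ MulAction.orbit G x) :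
    phiSlice K X f =
      ∑ r ∈ R, mark K (fun i : Fin (n + 1) =>
        MulAction.stabilizer G (chainComp X f i r)) :=
  phi_eq_sum_marks_general K X f hf R hR
end

section
/- Let [Π_n(G)] be a set of representatives of the conjugacy classes of n-slices of the finite group G, and let B_n(G) be the subgroup of ∏_{T̄ ∈ [Π_n(G)]} ℤ generated by the vectors v_{S̄} (S̄ ∈ [Π_n(G)]), where v_{S̄} has T̄-coordinate m(T̄,S̄). Then the quotient abelian group (∏_{T̄ ∈ [Π_n(G)]} ℤ)/B_n(G) is isomorphic to ⊕_{S̄ ∈ [Π_n(G)]} ℤ/[N_G(S̄):S_0]ℤ. -/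
variable {G : Type*}

/-- The conjugate slice `ᵍS̄ = (gS₀g⁻¹, …, gSₙg⁻¹)`. -/
def sliceConj [Group G] {n : ℕ} (g : G) (S : Fin (n + 1) → Subgroup G) :
    Fin (n + 1) → Subgroup G :=
  fun i => (S i).map (MulAut.conj g).toMonoidHom

/-- The normalizer `N_G(S̄) = ⋂ᵢ N_G(Sᵢ)` of a slice. -/
def sliceNormalizer [Group G] {n : ℕ} (S : Fin (n + 1) → Subgroup G) : Subgroup G :=
  ⨅ i, Subgroup.normalizer (S i : Set G)

/-- The index `[N_G(S̄) : S₀]`. -/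
noncomputable def sliceIndex [Group G] {n : ℕ} (S : Fin (n + 1) → Subgroup G) : ℕ :=
  (S 0).relIndex (sliceNormalizer S)

/-!
Order slices by their weight `∑ᵢ |Sᵢ|`. A nonzero mark `m(T̄,S̄)` forces `T̄ ≤ ᵍS̄` for some `g`,
so the mark matrix is triangular for this order, with diagonal entries `m(S̄,S̄) = [N_G(S̄):S₀]`.
Its columns satisfy the congruences `∑_{gT₀ ∈ N_G(T̄)/T₀} m(⟨T̄,g⟩, S̄) ≡ 0 mod [N_G(T̄):T₀]`,
where `⟨T̄,g⟩ = (T₀ ⊔ ⟨g⟩, …, Tₙ ⊔ ⟨g⟩)`: the mark `m(⟨T̄,g⟩, S̄)` counts the fixed points of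
`g` on the cosets `hS₀` with `T̄ ≤ ʰS̄`, on which `N_G(T̄)` acts, so Burnside's lemma applies.
The map `ℤ^[Π_n(G)] → ∏ ℤ/[N_G(T̄):T₀]ℤ` collecting these congruences is unitriangular for the
weight order; hence it is onto, and descending induction on the weight shows that its kernel is
spanned by the columns of the mark matrix.
-/

section Unitriangular

variable {ι : Type*} [Finite ι] {w : ι → ℕ}

theorem induction_on_weight {A : ι → Type*} [∀ i, Zero (A i)] {P : (∀ i, A i) → Prop}
    (zero : P 0)
    (step : ∀ m x, (∀ i, m + 1 ≤ w i → x i = 0) →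
      (∀ y, (∀ i, m ≤ w i → y i = 0) → P y) → P x)
    (x : ∀ i, A i) : P x := by
  suffices ∀ m x, (∀ i, m ≤ w i → x i = 0) → P x by
    obtain ⟨M, hM⟩ := Finite.exists_le w
    exact this (M + 1) x fun i hi => absurd (hM i) (by omega)
  intro m
  induction m with
  | zero =>
    intro x hx
    rwa [show x = 0 from funext fun i => hx i (Nat.zero_le _)]
  | succ m ih => exact fun x hx => step m x hx ih

variable {d : ι → ℕ} {q : (ι → ℤ) →+ ∀ i, ZMod (d i)}

theorem surjective_of_unitriangular
    (hq : ∀ x i, (∀ j, w i < w j → x j = 0) → q x i = x i) : Function.Surjective q := by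
  classical
  refine fun y => induction_on_weight (w := w) (P := (· ∈ q.range)) (zero_mem _)
    (fun m y hy ih => ?_) y
  let x : ι → ℤ := fun i => if w i = m then ((y i).cast : ℤ) else 0
  have hqx : ∀ i, m ≤ w i → q x i = y i := by
    intro i hi
    rw [hq x i fun j hj => if_neg (by omega)]
    by_cases h : w i = m
    · simp only [x, if_pos h, ZMod.intCast_zmod_cast]
    · simp only [x, if_neg h, Int.cast_zero, hy i (by omega)]
  simpa using add_mem (ih (y - q x) fun i hi => sub_eq_zero.2 (hqx i hi).symm)
    (AddMonoidHom.mem_range.2 ⟨x, rfl⟩)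

theorem ker_le_closure_range_of_unitriangular {v : ι → ι → ℤ}
    (hq : ∀ x i, (∀ j, w i < w j → x j = 0) → q x i = x i)
    (hv : ∀ i j, w i ≤ w j → j ≠ i → v i j = 0) (hdiag : ∀ i, v i i = d i)
    (hqv : ∀ i, q (v i) = 0) :
    q.ker ≤ AddSubgroup.closure (Set.range v) := by
  classical
  have : Fintype ι := Fintype.ofFinite ι
  refine fun x => induction_on_weight (w := w)
    (P := fun x => x ∈ q.ker → x ∈ AddSubgroup.closure (Set.range v)) (fun _ => zero_mem _)
    (fun m x hx ih hqx => ?_) x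
  let z := ∑ i ∈ Finset.univ.filter (w · = m), (x i / d i) • v i
  have hz : z ∈ AddSubgroup.closure (Set.range v) :=
    sum_mem fun i _ => zsmul_mem (AddSubgroup.subset_closure (Set.mem_range_self i)) _
  have hqz : q z = 0 := by
    simp only [z, map_sum, map_zsmul, hqv, smul_zero, Finset.sum_const_zero]
  have hzx : ∀ j, m ≤ w j → z j = x j := by
    intro j hj
    simp only [z, Finset.sum_apply, Pi.smul_apply, smul_eq_mul]
    by_cases h : w j = m
    · have hdvd : (d j : ℤ) ∣ x j := by
        rw [← ZMod.intCast_zmod_eq_zero_iff_dvd, ← hq x j fun k hk => hx k (by omega)]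
        exact congrFun (AddMonoidHom.mem_ker.1 hqx) j
      rw [Finset.sum_eq_single_of_mem j (by simpa using h) fun i hi hij => by
        rw [hv i j (by simp at hi; omega) (Ne.symm hij), mul_zero], hdiag]
      exact Int.ediv_mul_cancel hdvd
    · rw [hx j (by omega)]
      refine Finset.sum_eq_zero fun i hi => ?_
      simp only [Finset.mem_filter, Finset.mem_univ, true_and] at hi
      rw [hv i j (by omega) (by rintro rfl; omega), mul_zero]
  simpa using add_mem (ih (x - z) (fun j hj => sub_eq_zero.2 (hzx j hj).symm)
    (by rw [AddMonoidHom.mem_ker, map_sub, hqx, hqz, sub_zero])) hz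

end Unitriangular

theorem QuotientGroup.smul_mk_eq_mk_iff {α : Type*} [Group α] {s : Subgroup α} {g h : α} :
    g • (h : α ⧸ s) = h ↔ h⁻¹ * g * h ∈ s := by
  rw [MulAction.Quotient.smul_coe, smul_eq_mul, eq_comm, QuotientGroup.eq, mul_assoc]

theorem QuotientGroup.out_mem_iff {α : Type*} [Group α] {s : Subgroup α} {c : α ⧸ s} :
    c.out ∈ s ↔ c = ((1 : α) : α ⧸ s) := by
  conv_rhs => rw [← QuotientGroup.out_eq' c]
  rw [QuotientGroup.eq, mul_one, inv_mem_iff]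

theorem Subgroup.sum_eq_card_smul_sum_out {α M : Type*} [Group α] [Fintype α] [AddCommMonoid M]
    (s : Subgroup α) [Fintype (α ⧸ s)] (f : α → M)
    (hf : ∀ g, ∀ h ∈ s, f (g * h) = f g) :
    ∑ g, f g = Nat.card s • ∑ c : α ⧸ s, f c.out := by
  classical
  have hout (g : α) : f g = f (g : α ⧸ s).out := by
    obtain ⟨h, hh⟩ := QuotientGroup.mk_out_eq_mul s g
    rw [hh, hf g h h.2]
  have hfiber (c : α ⧸ s) :
      (Finset.univ.filter fun g : α => (g : α ⧸ s) = c).card = Nat.card s := by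
    have h := QuotientGroup.card_preimage_mk s {c}
    rw [Nat.card_unique (α := ({c} : Set (α ⧸ s))), mul_one] at h
    rw [← Fintype.card_subtype, ← Nat.card_eq_fintype_card, ← h]
    rfl
  rw [Finset.sum_congr rfl fun g _ => hout g, Finset.sum_comp (fun c : α ⧸ s => f c.out),
    Finset.image_univ_of_surjective QuotientGroup.mk_surjective, Finset.smul_sum]
  simp only [hfiber]

section Conjugation

variable [Group G] {n : ℕ}

theorem mem_sliceConj {g k : G} {S : Fin (n + 1) → Subgroup G} {i : Fin (n + 1)} :
    k ∈ sliceConj g S i ↔ g⁻¹ * k * g ∈ S i := by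
  rw [sliceConj, Subgroup.mem_map_equiv]
  simp [MulAut.conj, mul_assoc]

theorem sliceConj_one (S : Fin (n + 1) → Subgroup G) : sliceConj 1 S = S := by
  ext i k
  simp [mem_sliceConj]

theorem sliceConj_mul (g h : G) (S : Fin (n + 1) → Subgroup G) :
    sliceConj (g * h) S = sliceConj g (sliceConj h S) := by
  ext i k
  simp only [mem_sliceConj, mul_inv_rev, mul_assoc]

theorem sliceConj_mono (g : G) : Monotone (sliceConj (n := n) g) :=
  fun _ _ h i => Subgroup.map_mono (h i)

theorem Monotone.sliceConj {S : Fin (n + 1) → Subgroup G} (hS : Monotone S) (g : G) :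
    Monotone (sliceConj g S) :=
  fun _ _ hij => Subgroup.map_mono (hS hij)

theorem le_sliceConj_iff {g : G} {K L : Fin (n + 1) → Subgroup G} :
    K ≤ sliceConj g L ↔ sliceConj g⁻¹ K ≤ L := by
  constructor <;> intro h
  · simpa [← sliceConj_mul, sliceConj_one] using sliceConj_mono g⁻¹ h
  · simpa [← sliceConj_mul, sliceConj_one] using sliceConj_mono g h

theorem mem_sliceNormalizer_iff {g : G} {S : Fin (n + 1) → Subgroup G} :
    g ∈ sliceNormalizer S ↔ sliceConj g S = S := by
  simp only [sliceNormalizer, Subgroup.mem_iInf, Subgroup.mem_normalizer_iff_map_conj_eq,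
    funext_iff]
  rfl

noncomputable def sliceWeight (S : Fin (n + 1) → Subgroup G) : ℕ :=
  ∑ i, Nat.card (S i)

theorem sliceWeight_sliceConj (g : G) (S : Fin (n + 1) → Subgroup G) :
    sliceWeight (sliceConj g S) = sliceWeight S :=
  Finset.sum_congr rfl fun i _ =>
    (Nat.card_congr ((S i).equivMapOfInjective _ (MulAut.conj g).injective).toEquiv).symm

theorem sliceWeight_strictMono [Finite G] : StrictMono (sliceWeight (G := G) (n := n)) := by
  intro K L h
  obtain ⟨hle, i, hi⟩ := Pi.lt_def.1 h
  refine Finset.sum_lt_sum (fun j _ => Subgroup.card_le_of_le (hle j))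
    ⟨i, Finset.mem_univ _, ?_⟩
  exact (Subgroup.card_le_of_le hi.le).lt_of_ne fun h =>
    hi.ne (Subgroup.eq_of_le_of_card_ge hi.le h.ge)

theorem eq_of_le_of_sliceWeight_le [Finite G] {K L : Fin (n + 1) → Subgroup G} (h : K ≤ L)
    (hw : sliceWeight L ≤ sliceWeight K) : K = L :=
  h.eq_of_not_lt fun hlt => (sliceWeight_strictMono hlt).not_ge hw

end Conjugation

section MarkedCosets

variable [Group G] {n : ℕ}

def markedCosets (K S : Fin (n + 1) → Subgroup G) :
    SubMulAction (sliceNormalizer K) (G ⧸ S 0) where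
  carrier := {x | ∃ g : G, (g : G ⧸ S 0) = x ∧ K ≤ sliceConj g S}
  smul_mem' := by
    rintro ⟨a, ha⟩ _ ⟨g, rfl, hg⟩
    refine ⟨a * g, rfl, ?_⟩
    rw [sliceConj_mul, ← mem_sliceNormalizer_iff.1 ha]
    exact sliceConj_mono a hg

theorem mem_markedCosets {K S : Fin (n + 1) → Subgroup G} {x : G ⧸ S 0} :
    x ∈ markedCosets K S ↔ ∃ g : G, (g : G ⧸ S 0) = x ∧ K ≤ sliceConj g S :=
  Iff.rfl

theorem mark_eq_card_markedCosets (K S : Fin (n + 1) → Subgroup G) :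
    mark K S = Nat.card (markedCosets K S) := by
  refine Nat.card_congr (Equiv.subtypeEquivRight fun x => ?_)
  simp only [mem_markedCosets, Pi.le_def, SetLike.le_def, mem_sliceConj]

theorem mark_sliceConj (g : G) (K S : Fin (n + 1) → Subgroup G) :
    mark (sliceConj g K) S = mark K S := by
  rw [mark_eq_card_markedCosets, mark_eq_card_markedCosets]
  refine Nat.card_congr ((MulAction.toPerm g⁻¹).subtypeEquiv fun x => ?_)
  simp only [mem_markedCosets, MulAction.toPerm_apply]
  constructor
  · rintro ⟨h, rfl, hh⟩
    exact ⟨g⁻¹ * h, rfl, by rwa [sliceConj_mul, le_sliceConj_iff, inv_inv]⟩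
  · rintro ⟨h, hx, hh⟩
    refine ⟨g * h, by rw [← smul_inv_smul g x, ← hx]; rfl, ?_⟩
    rw [sliceConj_mul]
    exact sliceConj_mono g hh

theorem exists_le_sliceConj_of_mark_ne_zero {K S : Fin (n + 1) → Subgroup G}
    (h : mark K S ≠ 0) : ∃ g : G, K ≤ sliceConj g S := by
  rw [mark_eq_card_markedCosets] at h
  obtain ⟨⟨_, g, -, hg⟩⟩ := (Nat.card_ne_zero.1 h).1
  exact ⟨g, hg⟩

theorem mark_self [Finite G] (S : Fin (n + 1) → Subgroup G) : mark S S = sliceIndex S := by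
  have hstab : MulAction.stabilizer (sliceNormalizer S) ((1 : G) : G ⧸ S 0) =
      (S 0).subgroupOf (sliceNormalizer S) := by
    ext g
    show (((g * 1 : G)) : G ⧸ S 0) = ((1 : G) : G ⧸ S 0) ↔ (g : G) ∈ S 0
    rw [QuotientGroup.eq]
    simp
  have horbit : (markedCosets S S : Set (G ⧸ S 0)) =
      MulAction.orbit (sliceNormalizer S) ((1 : G) : G ⧸ S 0) := by
    ext x
    constructor
    · rintro ⟨g, rfl, hg⟩
      have hN : g ∈ sliceNormalizer S := mem_sliceNormalizer_iff.2
        (eq_of_le_of_sliceWeight_le hg (sliceWeight_sliceConj g S).le).symm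
      exact ⟨⟨g, hN⟩, show ((g * 1 : G) : G ⧸ S 0) = g by rw [mul_one]⟩
    · rintro ⟨⟨g, hg⟩, rfl⟩
      exact ⟨g, show (g : G ⧸ S 0) = ((g * 1 : G) : G ⧸ S 0) by rw [mul_one],
        (mem_sliceNormalizer_iff.1 hg).ge⟩
  rw [mark_eq_card_markedCosets, sliceIndex, Subgroup.relIndex, ← hstab,
    MulAction.index_stabilizer, ← horbit]
  exact Nat.card_coe_set_eq _

end MarkedCosets

section Adjoin

variable [Group G] {n : ℕ}

def sliceAdjoin (K : Fin (n + 1) → Subgroup G) (g : G) : Fin (n + 1) → Subgroup G :=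
  fun i => K i ⊔ Subgroup.zpowers g

theorem sliceAdjoin_le_iff {K L : Fin (n + 1) → Subgroup G} {g : G} :
    sliceAdjoin K g ≤ L ↔ K ≤ L ∧ ∀ i, g ∈ L i := by
  simp only [Pi.le_def, sliceAdjoin, sup_le_iff, Subgroup.zpowers_le, forall_and]

theorem le_sliceAdjoin (K : Fin (n + 1) → Subgroup G) (g : G) : K ≤ sliceAdjoin K g :=
  (sliceAdjoin_le_iff.1 le_rfl).1

theorem mem_sliceAdjoin (K : Fin (n + 1) → Subgroup G) (g : G) (i : Fin (n + 1)) :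
    g ∈ sliceAdjoin K g i :=
  (sliceAdjoin_le_iff.1 le_rfl).2 i

theorem Monotone.sliceAdjoin {K : Fin (n + 1) → Subgroup G} (hK : Monotone K) (g : G) :
    Monotone (sliceAdjoin K g) :=
  fun _ _ hij => sup_le_sup_right (hK hij) _

theorem sliceAdjoin_le_iff_of_monotone {K L : Fin (n + 1) → Subgroup G} (hL : Monotone L)
    {g : G} : sliceAdjoin K g ≤ L ↔ K ≤ L ∧ g ∈ L 0 := by
  rw [sliceAdjoin_le_iff]
  exact and_congr_right' ⟨fun h => h 0, fun h i => hL (Fin.zero_le i) h⟩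

theorem sliceAdjoin_eq_self_iff {K : Fin (n + 1) → Subgroup G} (hK : Monotone K) {g : G} :
    sliceAdjoin K g = K ↔ g ∈ K 0 := by
  rw [← (le_sliceAdjoin K g).ge_iff_eq', sliceAdjoin_le_iff_of_monotone hK]
  exact and_iff_right le_rfl

theorem sliceAdjoin_mul_of_mem {K : Fin (n + 1) → Subgroup G} (hK : Monotone K) (g : G)
    {h : G} (hh : h ∈ K 0) : sliceAdjoin K (g * h) = sliceAdjoin K g := by
  have hKh : ∀ i, h ∈ sliceAdjoin K g i ⊓ sliceAdjoin K (g * h) i := fun i =>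
    ⟨le_sliceAdjoin K g i (hK (Fin.zero_le i) hh), le_sliceAdjoin K _ i (hK (Fin.zero_le i) hh)⟩
  refine le_antisymm (sliceAdjoin_le_iff.2 ⟨le_sliceAdjoin K g, fun i => ?_⟩)
    (sliceAdjoin_le_iff.2 ⟨le_sliceAdjoin K _, fun i => ?_⟩)
  · exact mul_mem (mem_sliceAdjoin K g i) (hKh i).1
  · simpa using mul_mem (mem_sliceAdjoin K (g * h) i) (inv_mem (hKh i).2)

theorem mark_sliceAdjoin {K S : Fin (n + 1) → Subgroup G} (hS : Monotone S)
    (g : sliceNormalizer K) :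
    mark (sliceAdjoin K g) S = Nat.card (MulAction.fixedBy (markedCosets K S) g) := by
  have hmem (x : G ⧸ S 0) :
      x ∈ markedCosets (sliceAdjoin K g) S ↔ x ∈ markedCosets K S ∧ (g : G) • x = x := by
    simp only [mem_markedCosets, sliceAdjoin_le_iff_of_monotone (hS.sliceConj _),
      mem_sliceConj]
    constructor
    · rintro ⟨h, rfl, hK, hg⟩
      exact ⟨⟨h, rfl, hK⟩, QuotientGroup.smul_mk_eq_mk_iff.2 hg⟩
    · rintro ⟨⟨h, rfl, hK⟩, hg⟩
      exact ⟨h, rfl, hK, QuotientGroup.smul_mk_eq_mk_iff.1 hg⟩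
  rw [mark_eq_card_markedCosets]
  exact Nat.card_congr ((Equiv.subtypeEquivRight hmem).trans
    ((Equiv.subtypeSubtypeEquivSubtypeInter _ _).symm.trans
      (Equiv.subtypeEquivRight fun _ => ⟨fun h => Subtype.ext h, congrArg Subtype.val⟩)))

end Adjoin

abbrev SliceWeyl [Group G] {n : ℕ} (S : Fin (n + 1) → Subgroup G) : Type _ :=
  sliceNormalizer S ⧸ (S 0).subgroupOf (sliceNormalizer S)

section Burnside

attribute [local instance] Fintype.ofFinite

variable [Group G] [Finite G] {n : ℕ}

theorem sliceIndex_dvd_sum_mark_sliceAdjoin {K S : Fin (n + 1) → Subgroup G} (hK : Monotone K)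
    (hS : Monotone S) :
    sliceIndex K ∣ ∑ c : SliceWeyl K, mark (sliceAdjoin K c.out) S := by
  set N := sliceNormalizer K
  set H := (K 0).subgroupOf N
  have hconst (g : N) (h : N) (hh : h ∈ H) :
      mark (sliceAdjoin K ↑(g * h)) S = mark (sliceAdjoin K g) S := by
    rw [Subgroup.coe_mul, sliceAdjoin_mul_of_mem hK _ (Subgroup.mem_subgroupOf.1 hh)]
  have hburnside := MulAction.sum_card_fixedBy_eq_card_orbits_mul_card_group N (markedCosets K S)
  simp only [Fintype.card_eq_nat_card, ← mark_sliceAdjoin hS] at hburnside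
  rw [Subgroup.sum_eq_card_smul_sum_out H _ hconst, smul_eq_mul,
    Subgroup.card_eq_card_quotient_mul_card_subgroup H] at hburnside
  refine ⟨Nat.card (MulAction.orbitRel.Quotient N (markedCosets K S)),
    Nat.eq_of_mul_eq_mul_left (Nat.card_pos (α := H)) ?_⟩
  rw [hburnside]
  simp only [sliceIndex, Subgroup.relIndex, Subgroup.index_eq_card]
  ring

end Burnside

def IsSliceTransversal [Group G] {n : ℕ}
    (R : Finset {S : Fin (n + 1) → Subgroup G // Monotone S}) : Prop :=
  ∀ S : {S : Fin (n + 1) → Subgroup G // Monotone S},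
    ∃! T, T ∈ R ∧ ∃ g : G, sliceConj g S.1 = T.1

section Representatives

variable [Group G] {n : ℕ} {R : Finset {S : Fin (n + 1) → Subgroup G // Monotone S}}
  (hR : IsSliceTransversal R)

noncomputable def sliceRep (U : {S : Fin (n + 1) → Subgroup G // Monotone S}) : R :=
  ⟨(hR U).choose, (hR U).choose_spec.1.1⟩

theorem exists_sliceConj_eq_sliceRep (U : {S : Fin (n + 1) → Subgroup G // Monotone S}) :
    ∃ g : G, sliceConj g U.1 = (sliceRep hR U).1.1 :=
  (hR U).choose_spec.1.2

theorem sliceRep_eq_of_sliceConj_eq {U : {S : Fin (n + 1) → Subgroup G // Monotone S}} {T : R}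
    {g : G} (hg : sliceConj g U.1 = T.1.1) : sliceRep hR U = T :=
  Subtype.ext ((hR U).choose_spec.2 T.1 ⟨T.2, g, hg⟩).symm

theorem sliceRep_coe (T : R) : sliceRep hR T.1 = T :=
  sliceRep_eq_of_sliceConj_eq hR (g := 1) (sliceConj_one _)

theorem mark_sliceRep (U : {S : Fin (n + 1) → Subgroup G // Monotone S})
    (S : Fin (n + 1) → Subgroup G) : mark (sliceRep hR U).1.1 S = mark U.1 S := by
  obtain ⟨g, hg⟩ := exists_sliceConj_eq_sliceRep hR U
  rw [← hg, mark_sliceConj]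

theorem sliceWeight_sliceRep (U : {S : Fin (n + 1) → Subgroup G // Monotone S}) :
    sliceWeight (sliceRep hR U).1.1 = sliceWeight U.1 := by
  obtain ⟨g, hg⟩ := exists_sliceConj_eq_sliceRep hR U
  rw [← hg, sliceWeight_sliceConj]

theorem mark_eq_zero_of_sliceWeight_le [Finite G] (hR : IsSliceTransversal R) {S T : R}
    (hw : sliceWeight S.1.1 ≤ sliceWeight T.1.1) (hne : T ≠ S) : mark T.1.1 S.1.1 = 0 := by
  by_contra hm
  obtain ⟨g, hg⟩ := exists_le_sliceConj_of_mark_ne_zero hm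
  have heq : T.1.1 = sliceConj g S.1.1 :=
    eq_of_le_of_sliceWeight_le hg (by rwa [sliceWeight_sliceConj])
  exact hne ((sliceRep_eq_of_sliceConj_eq hR heq.symm).symm.trans (sliceRep_coe hR S))

noncomputable def sliceAdjoinRep (T : R) (g : G) : R :=
  sliceRep hR ⟨sliceAdjoin T.1.1 g, T.1.2.sliceAdjoin g⟩

theorem sliceAdjoinRep_of_mem {T : R} {g : G} (hg : g ∈ T.1.1 0) :
    sliceAdjoinRep hR T g = T := by
  have h : (⟨sliceAdjoin T.1.1 g, T.1.2.sliceAdjoin g⟩ : {S // Monotone S}) = T.1 :=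
    Subtype.ext ((sliceAdjoin_eq_self_iff T.1.2).2 hg)
  rw [sliceAdjoinRep, h, sliceRep_coe]

theorem sliceWeight_lt_sliceAdjoinRep [Finite G] {T : R} {g : G} (hg : g ∉ T.1.1 0) :
    sliceWeight T.1.1 < sliceWeight (sliceAdjoinRep hR T g).1.1 := by
  rw [sliceAdjoinRep, sliceWeight_sliceRep]
  refine sliceWeight_strictMono ((le_sliceAdjoin _ _).lt_of_ne fun h => hg ?_)
  exact (sliceAdjoin_eq_self_iff T.1.2).1 h.symm

end Representatives

section GhostCongruence

attribute [local instance] Fintype.ofFinite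

variable [Group G] [Finite G] {n : ℕ} {R : Finset {S : Fin (n + 1) → Subgroup G // Monotone S}}
  (hR : IsSliceTransversal R)

noncomputable def ghostCongruence : (R → ℤ) →+ ∀ T : R, ZMod (sliceIndex T.1.1) where
  toFun x T :=
    ∑ c : SliceWeyl T.1.1, (x (sliceAdjoinRep hR T c.out) : ZMod (sliceIndex T.1.1))
  map_zero' := by ext; simp
  map_add' x y := by ext; simp [Finset.sum_add_distrib]

theorem ghostCongruence_apply (x : R → ℤ) (T : R) :
    ghostCongruence hR x T =
      ∑ c : SliceWeyl T.1.1, (x (sliceAdjoinRep hR T c.out) : ZMod (sliceIndex T.1.1)) :=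
  rfl

theorem ghostCongruence_apply_of_forall_lt (x : R → ℤ) (T : R)
    (hx : ∀ U, sliceWeight T.1.1 < sliceWeight U.1.1 → x U = 0) :
    ghostCongruence hR x T = x T := by
  have hout {c : SliceWeyl T.1.1} :
      (c.out : G) ∈ T.1.1 0 ↔ c = ((1 : sliceNormalizer T.1.1) : _) :=
    Subgroup.mem_subgroupOf.symm.trans QuotientGroup.out_mem_iff
  rw [ghostCongruence_apply, Finset.sum_eq_single_of_mem _ (Finset.mem_univ _) fun c _ hc => ?_]
  · rw [sliceAdjoinRep_of_mem hR (hout.2 rfl)]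
  · rw [hx _ (sliceWeight_lt_sliceAdjoinRep hR (mt hout.1 hc)), Int.cast_zero]

theorem ghostCongruence_mark (S : R) :
    ghostCongruence hR (fun T => (mark T.1.1 S.1.1 : ℤ)) = 0 := by
  ext T
  rw [ghostCongruence_apply]
  simp only [mark_sliceRep, sliceAdjoinRep, Int.cast_natCast, ← Nat.cast_sum]
  exact (ZMod.natCast_eq_zero_iff _ _).2 (sliceIndex_dvd_sum_mark_sliceAdjoin T.1.2 S.1.2)

end GhostCongruence

/-- the quotient of `∏_{T̄} ℤ` by the subgroup generated by the mark
vectors `v_{S̄}` is isomorphic to `⊕_{S̄} ℤ/[N_G(S̄):S₀]ℤ`. -/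
theorem cokernel_ghost_map {n : ℕ} [Group G] [Finite G]
    (R : Finset {S : Fin (n + 1) → Subgroup G // Monotone S})
    (hR : ∀ S : {S : Fin (n + 1) → Subgroup G // Monotone S},
      ∃! T, T ∈ R ∧ ∃ g : G, sliceConj g S.1 = T.1) :
    Nonempty
      (((R → ℤ) ⧸ AddSubgroup.closure
          (Set.range (fun S : R => fun T : R => (mark T.1.1 S.1.1 : ℤ)))) ≃+
        ∀ S : R, ZMod (sliceIndex S.1.1)) := by
  have hunitri := ghostCongruence_apply_of_forall_lt hR
  have hker : AddSubgroup.closure (Set.range fun S : R => fun T : R => (mark T.1.1 S.1.1 : ℤ))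
      = (ghostCongruence hR).ker :=
    le_antisymm ((AddSubgroup.closure_le _).2 (Set.range_subset_iff.2 (ghostCongruence_mark hR)))
      (ker_le_closure_range_of_unitriangular hunitri
        (fun S T hw hne => by simp [mark_eq_zero_of_sliceWeight_le hR hw hne])
        (fun S => by simp [mark_self]) (ghostCongruence_mark hR))
  exact ⟨(QuotientAddGroup.quotientAddEquivOfEq hker).trans
    (QuotientAddGroup.quotientKerEquivOfSurjective _ (surjective_of_unitriangular hunitri))⟩
end
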